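/- Let d ≥ 1, δ > 0, C > 0, α > 0. There exist α̃ > 0 and C' < ∞ depending only on d, δ, C, α with the following property: for every finite set Λ ⊂ ℤ^d and every symmetric real matrix A = (A_{ij})_{i,j∈Λ} that is strictly diagonally dominant, i.e. Σ_{j∈Λ, j≠i} |A_{ij}| + δ ≤ A_{ii} for all i ∈ Λ, and whose entries satisfy |A_{ij}| ≤ C/(|i−j|^{d+α} + 1) for all i ≠ j, the matrix A is invertible and its inverse satisfies |(A^{-1})_{ij}| ≤ C'/(|i−j|^{d+α̃} + 1) for all i, j ∈ Λ. -/

import Mathlib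

/-!
Write `A = D (1 - J)` with `D` the diagonal of `A`. Diagonal dominance, together with the
summability of `|k|^(-(d+α))` over `ℤ^d`, bounds the row sums of `|J|` by some `q < 1`
depending only on `d, δ, C, α`; hence `A⁻¹ = ∑ₙ Jⁿ D⁻¹` and
`|(Jⁿ D⁻¹)ᵢⱼ| ≤ (Mₙ)ᵢⱼ := (|J|ⁿ D⁻¹)ᵢⱼ`. As `A` is symmetric, `|J|` is reversible with
respect to the weights `Aᵢᵢ`, so `Mₙ` is symmetric and its column sums are at most `qⁿ / δ`.
Writing `Mₙ₊₁ = |J| Mₙ` and splitting each path `i → k → j` according to whether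
`|i - k| ≥ |i - j| / (n + 2)` or `|k - j| ≥ (n + 1) |i - j| / (n + 2)` gives
`(Mₙ)ᵢⱼ |i - j|^(d+α) ≲ (n + 1)^(d+α+1) qⁿ` by induction. This is summable in `n`, so `A⁻¹`
decays with the same exponent, `α̃ = α`.
-/

open Real

noncomputable section

theorem Real.rpow_le_of_le_add {r a b u v s : ℝ} (hr : 0 ≤ r) (ha : 0 ≤ a) (hb : 0 ≤ b)
    (hu : 0 < u) (hv : 0 < v) (huv : u⁻¹ + v⁻¹ ≤ 1) (hs : 0 ≤ s) (h : r ≤ a + b) :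
    r ^ s ≤ u ^ s * a ^ s + v ^ s * b ^ s := by
  rw [← mul_rpow hu.le ha, ← mul_rpow hv.le hb]
  rcases le_total r (u * a) with hua | hua
  · have := rpow_nonneg (mul_nonneg hv.le hb) s
    linarith [rpow_le_rpow hr hua hs]
  · have hvb : r ≤ v * b := by
      have h1 : r * u⁻¹ + r * v⁻¹ ≤ r := by
        rw [← mul_add]; exact mul_le_of_le_one_right hr huv
      have h2 : a ≤ r * u⁻¹ := by rw [le_mul_inv_iff₀ hu, mul_comm]; exact hua
      have h3 : r * v⁻¹ ≤ b := by linarith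
      rwa [mul_inv_le_iff₀ hv, mul_comm] at h3
    have := rpow_nonneg (mul_nonneg hu.le ha) s
    linarith [rpow_le_rpow hr hvb hs]

theorem le_div_add_mul_of_add_le {x K δ a : ℝ} (hK : 0 ≤ K) (hδ : 0 < δ) (hxK : x ≤ K)
    (hxa : x + δ ≤ a) : x ≤ K / (K + δ) * a := by
  rw [div_mul_eq_mul_div, le_div_iff₀ (by positivity)]
  nlinarith

theorem summable_add_one_rpow_mul_geometric {t q : ℝ} (hq0 : 0 ≤ q) (hq1 : q < 1) :
    Summable fun n : ℕ => ((n : ℝ) + 1) ^ t * q ^ n := by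
  set k := ⌈t⌉₊
  have hk :=
    summable_pow_mul_geometric_of_norm_lt_one k (r := q) (by rwa [norm_of_nonneg hq0])
  refine Summable.of_norm_bounded_eventually_nat (hk.mul_left (2 ^ k)) ?_
  filter_upwards [Filter.eventually_ge_atTop 1] with n hn
  have hn' : (1 : ℝ) ≤ n := by exact_mod_cast hn
  rw [norm_of_nonneg (by positivity), ← mul_assoc, ← mul_pow]
  gcongr
  calc ((n : ℝ) + 1) ^ t ≤ ((n : ℝ) + 1) ^ (k : ℝ) :=
        rpow_le_rpow_of_exponent_le (by linarith) (Nat.le_ceil t)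
    _ ≤ (2 * n) ^ k := by rw [rpow_natCast]; gcongr; linarith

def neumannDecayConst (a m q s : ℝ) : ℝ :=
  ∑' n : ℕ, (a * m / q * (((n : ℝ) + 1) ^ (s + 1) * q ^ n) + m * q ^ n)

theorem hasSum_neumannDecayConst {a m q s : ℝ} (hq0 : 0 ≤ q) (hq1 : q < 1) :
    HasSum (fun n : ℕ => a * m / q * (((n : ℝ) + 1) ^ (s + 1) * q ^ n) + m * q ^ n)
      (neumannDecayConst a m q s) :=
  (((summable_add_one_rpow_mul_geometric hq0 hq1).mul_left _).add
    ((summable_geometric_of_lt_one hq0 hq1).mul_left m)).hasSum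

theorem neumannDecayConst_pos {a m q s : ℝ} (ha : 0 ≤ a) (hm : 0 < m) (hq0 : 0 < q)
    (hq1 : q < 1) : 0 < neumannDecayConst a m q s :=
  (hasSum_neumannDecayConst hq0.le hq1).summable.tsum_pos (fun _ => by positivity) 0
    (by positivity)

section Lattice

variable {ι : Type*} [Fintype ι] {s : ℝ}

theorem summable_norm_rpow_neg_of_card_lt (hs : (Fintype.card ι : ℝ) < s) :
    Summable fun k : ι → ℤ => ‖k‖ ^ (-s) := by
  let b := Pi.basisFun ℝ ι
  let L := Submodule.span ℤ (Set.range b)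
  have hL : Module.finrank ℤ L = Fintype.card ι := by
    rw [ZLattice.rank ℝ L, Module.finrank_fintype_fun_eq_card]
  let e : (ι → ℤ) ≃ L := (b.restrictScalars ℤ).equivFun.symm.toEquiv
  have he : ∀ k, ‖(e k : ι → ℝ)‖ = ‖k‖ := by
    intro k
    have : (e k : ι → ℝ) = fun t => (k t : ℝ) := by
      ext t
      rw [← Pi.basisFun_repr ℝ ι (e k : ι → ℝ) t, ← b.restrictScalars_repr_apply ℤ (e k) t,
        ← Module.Basis.equivFun_apply]
      simp only [e, LinearEquiv.coe_toEquiv, LinearEquiv.apply_symm_apply]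
      rfl
    simp only [this, Pi.norm_def]
    rfl
  have := (e.summable_iff (f := fun z : L => ‖z‖ ^ (-s))).mpr
    (ZLattice.summable_norm_rpow L (-s) (by rw [hL]; linarith))
  simpa [Function.comp_def, he] using this

theorem summable_one_div_norm_rpow_add_one (hs : (Fintype.card ι : ℝ) < s) :
    Summable fun k : ι → ℤ => 1 / (‖k‖ ^ s + 1) := by
  refine (summable_norm_rpow_neg_of_card_lt hs).of_norm_bounded_eventually ?_
  filter_upwards [Filter.eventually_cofinite_ne 0] with k hk
  have hk : 0 < ‖k‖ ^ s := rpow_pos_of_pos (norm_pos_iff.2 hk) s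
  rw [norm_of_nonneg (by positivity), rpow_neg (norm_nonneg k), ← one_div]
  exact one_div_le_one_div_of_le hk (by linarith)

theorem sum_one_div_dist_rpow_add_one_le_tsum (hs : (Fintype.card ι : ℝ) < s)
    (Λ : Finset (ι → ℤ)) (x : ι → ℤ) :
    ∑ k ∈ Λ, 1 / (dist x k ^ s + 1) ≤ ∑' k : ι → ℤ, 1 / (‖k‖ ^ s + 1) := by
  have hf := summable_one_div_norm_rpow_add_one hs
  simp only [dist_eq_norm]
  rw [← (Equiv.subLeft x).tsum_eq]
  exact (hf.comp_injective (Equiv.subLeft x).injective).sum_le_tsum Λ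
    (fun _ _ => by positivity)

theorem sum_erase_abs_le_mul_tsum [DecidableEq ι] (hs : (Fintype.card ι : ℝ) < s)
    {Λ : Finset (ι → ℤ)} {A : Matrix Λ Λ ℝ} {C : ℝ} (hC : 0 ≤ C)
    (hdecay : ∀ i j, i ≠ j → |A i j| ≤ C / (dist i.1 j.1 ^ s + 1)) (i : Λ) :
    ∑ j ∈ Finset.univ.erase i, |A i j| ≤ C * ∑' k : ι → ℤ, 1 / (‖k‖ ^ s + 1) :=
  calc ∑ j ∈ Finset.univ.erase i, |A i j|
      ≤ ∑ j ∈ Finset.univ.erase i, C * (1 / (dist i.1 j.1 ^ s + 1)) :=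
        Finset.sum_le_sum fun j hj => by
          rw [mul_one_div]; exact hdecay i j (Finset.ne_of_mem_erase hj).symm
    _ ≤ ∑ j : Λ, C * (1 / (dist i.1 j.1 ^ s + 1)) :=
        Finset.sum_le_sum_of_subset_of_nonneg (Finset.erase_subset _ _)
          fun _ _ _ => by positivity
    _ = C * ∑ k ∈ Λ, 1 / (dist i.1 k ^ s + 1) := by
        rw [← Finset.mul_sum, Finset.sum_coe_sort Λ fun k => 1 / (dist i.1 k ^ s + 1)]
    _ ≤ C * ∑' k : ι → ℤ, 1 / (‖k‖ ^ s + 1) := by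
        gcongr
        exact sum_one_div_dist_rpow_add_one_le_tsum hs Λ i.1

end Lattice

namespace Matrix

variable {ι : Type*}

section NeumannSeries

attribute [local instance] Matrix.linftyOpNormedRing Matrix.linftyOpNormedAlgebra

variable [Fintype ι] [DecidableEq ι]

theorem linfty_opNorm_le_of_sum_abs_le {N : Matrix ι ι ℝ} {q : ℝ} (hq : 0 ≤ q)
    (h : ∀ i, ∑ j, |N i j| ≤ q) : ‖N‖ ≤ q := by
  rw [linfty_opNorm_def, ← Real.le_toNNReal_iff_coe_le hq]
  refine Finset.sup_le fun i _ => ?_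
  rw [Real.le_toNNReal_iff_coe_le hq]
  simpa using h i

theorem hasSum_pow_mul_apply_inv (A B : Matrix ι ι ℝ) {q : ℝ} (hq : q < 1)
    (h : ∀ i, ∑ j, |(1 - B * A) i j| ≤ q) :
    IsUnit A ∧
      ∀ i j, HasSum (fun n => ((1 - B * A) ^ n * B : Matrix ι ι ℝ) i j) (A⁻¹ i j) := by
  have hN : ‖1 - B * A‖ < 1 := by
    rcases isEmpty_or_nonempty ι with hι | ⟨⟨i⟩⟩
    · rw [Subsingleton.elim (1 - B * A) 0, norm_zero]
      exact one_pos
    have hq0 : 0 ≤ q := (Finset.sum_nonneg fun j _ => abs_nonneg _).trans (h i)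
    exact (linfty_opNorm_le_of_sum_abs_le hq0 h).trans_lt hq
  have hinv : (∑' n, (1 - B * A) ^ n) * B * A = 1 := by
    have := geom_series_mul_neg _ hN
    rwa [sub_sub_cancel, ← mul_assoc] at this
  refine ⟨(isUnit_iff_isUnit_det A).mpr (isUnit_det_of_left_inverse hinv), fun i j => ?_⟩
  rw [inv_eq_left_inv hinv]
  have := (summable_geometric_of_norm_lt_one hN).hasSum.mul_right B
  exact Pi.hasSum.mp (Pi.hasSum.mp this i) j

end NeumannSeries

section NonnegEntries

variable [Fintype ι] [DecidableEq ι]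

theorem sum_pow_apply_le {R : Type*} [CommSemiring R] [PartialOrder R] [IsOrderedRing R]
    {P : Matrix ι ι R} {q : R} (hP : ∀ i j, 0 ≤ P i j) (hq : 0 ≤ q)
    (hrow : ∀ i, ∑ j, P i j ≤ q) (n : ℕ) (i : ι) : ∑ j, (P ^ n) i j ≤ q ^ n := by
  induction n generalizing i with
  | zero => simp [one_apply]
  | succ n ih =>
    calc ∑ j, (P ^ (n + 1)) i j = ∑ k, P i k * ∑ j, (P ^ n) k j := by
          simp only [pow_succ', mul_apply, Finset.mul_sum]
          exact Finset.sum_comm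
      _ ≤ ∑ k, P i k * q ^ n := by gcongr with k; exact hP i k; exact ih k
      _ ≤ q ^ (n + 1) := by
          rw [← Finset.sum_mul, pow_succ']
          exact mul_le_mul_of_nonneg_right (hrow i) (pow_nonneg hq n)

theorem abs_pow_apply_le {R : Type*} [CommRing R] [LinearOrder R] [IsStrictOrderedRing R]
    {N P : Matrix ι ι R} (h : ∀ i j, |N i j| ≤ P i j) (n : ℕ) (i j : ι) :
    |(N ^ n) i j| ≤ (P ^ n) i j := by
  induction n generalizing j with
  | zero => by_cases hij : i = j <;> simp [hij]
  | succ n ih =>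
    simp only [pow_succ, mul_apply]
    refine (Finset.abs_sum_le_sum_abs _ _).trans (Finset.sum_le_sum fun k _ => ?_)
    rw [abs_mul]
    exact mul_le_mul (ih k) (h k j) (abs_nonneg _) ((abs_nonneg _).trans (ih k))

theorem mul_pow_apply_comm {R : Type*} [CommSemiring R] {P : Matrix ι ι R} {w : ι → R}
    (h : ∀ i j, w i * P i j = w j * P j i) (n : ℕ) (i j : ι) :
    w i * (P ^ n) i j = w j * (P ^ n) j i := by
  have hP : SemiconjBy (diagonal w) P Pᵀ := by
    ext i j
    simp [diagonal_mul, mul_diagonal, h i j, mul_comm]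
  have := congrFun (congrFun (hP.pow_right n).eq i) j
  rwa [← transpose_pow, diagonal_mul, mul_diagonal, transpose_apply, mul_comm _ (w j)] at this

end NonnegEntries

section Decay

variable [Fintype ι] [PseudoMetricSpace ι] {s : ℝ}

theorem mul_apply_mul_dist_rpow_le {P M : Matrix ι ι ℝ} {a b p m u v : ℝ} (hs : 0 ≤ s)
    (hu : 0 < u) (hv : 0 < v) (huv : u⁻¹ + v⁻¹ ≤ 1) (hP0 : ∀ i j, 0 ≤ P i j)
    (hM0 : ∀ i j, 0 ≤ M i j) (hP : ∀ i k, P i k * dist i k ^ s ≤ a)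
    (hM : ∀ k j, M k j * dist k j ^ s ≤ b) (hProw : ∀ i, ∑ k, P i k ≤ p)
    (hMcol : ∀ j, ∑ k, M k j ≤ m) (i j : ι) :
    (P * M) i j * dist i j ^ s ≤ u ^ s * a * m + v ^ s * p * b := by
  have ha : 0 ≤ a := (mul_nonneg (hP0 i i) (rpow_nonneg dist_nonneg s)).trans (hP i i)
  have hb : 0 ≤ b := (mul_nonneg (hM0 j j) (rpow_nonneg dist_nonneg s)).trans (hM j j)
  calc (P * M) i j * dist i j ^ s = ∑ k, P i k * M k j * dist i j ^ s := by
        rw [mul_apply, Finset.sum_mul]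
    _ ≤ ∑ k, P i k * M k j * (u ^ s * dist i k ^ s + v ^ s * dist k j ^ s) := by
        gcongr with k
        · exact mul_nonneg (hP0 i k) (hM0 k j)
        · exact rpow_le_of_le_add dist_nonneg dist_nonneg dist_nonneg hu hv huv hs
            (dist_triangle i k j)
    _ = u ^ s * ∑ k, (P i k * dist i k ^ s) * M k j
          + v ^ s * ∑ k, P i k * (M k j * dist k j ^ s) := by
        rw [Finset.mul_sum, Finset.mul_sum, ← Finset.sum_add_distrib]
        congr 1 with k
        ring
    _ ≤ u ^ s * ∑ k, a * M k j + v ^ s * ∑ k, P i k * b := by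
        gcongr with k _ k _
        · exact hM0 k j
        · exact hP i k
        · exact hP0 i k
        · exact hM k j
    _ = u ^ s * (a * ∑ k, M k j) + v ^ s * ((∑ k, P i k) * b) := by
        rw [← Finset.mul_sum, ← Finset.sum_mul]
    _ ≤ u ^ s * (a * m) + v ^ s * (p * b) := by
        gcongr
        · exact hMcol j
        · exact hProw i
    _ = u ^ s * a * m + v ^ s * p * b := by ring

theorem apply_mul_dist_rpow_le_of_succ_eq_mul {P : Matrix ι ι ℝ} {M : ℕ → Matrix ι ι ℝ}
    {a m q : ℝ} (hs : 0 < s) (hq : 0 < q) (hP0 : ∀ i j, 0 ≤ P i j)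
    (hProw : ∀ i, ∑ j, P i j ≤ q) (hP : ∀ i j, P i j * dist i j ^ s ≤ a)
    (hM0 : ∀ n i j, 0 ≤ M n i j) (hMcol : ∀ n j, ∑ i, M n i j ≤ m * q ^ n)
    (hMdiag : ∀ i j, i ≠ j → M 0 i j = 0) (hMsucc : ∀ n, M (n + 1) = P * M n)
    (n : ℕ) (i j : ι) :
    M n i j * dist i j ^ s ≤ a * m / q * (((n : ℝ) + 1) ^ (s + 1) * q ^ n) := by
  have ha : 0 ≤ a := (mul_nonneg (hP0 i i) (rpow_nonneg dist_nonneg s)).trans (hP i i)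
  have hm : 0 ≤ m := by
    simpa using (Finset.sum_nonneg fun k _ => hM0 0 k j).trans (hMcol 0 j)
  induction n generalizing i j with
  | zero =>
    have : M 0 i j * dist i j ^ s = 0 := by
      rcases eq_or_ne i j with rfl | hij
      · rw [dist_self, zero_rpow hs.ne', mul_zero]
      · rw [hMdiag i j hij, zero_mul]
    rw [this]
    positivity
  | succ n ih =>
    have hn : (0 : ℝ) < n + 1 := by positivity
    have huv : ((n : ℝ) + 2)⁻¹ + (((n : ℝ) + 2) / (n + 1))⁻¹ ≤ 1 := by
      rw [inv_div]; field_simp; linarith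
    rw [hMsucc]
    refine (mul_apply_mul_dist_rpow_le hs.le (by positivity) (by positivity) huv hP0 (hM0 n) hP
      ih hProw (hMcol n) i j).trans_eq ?_
    rw [div_rpow (by positivity) hn.le, rpow_add_one hn.ne', Nat.cast_succ, add_assoc,
      one_add_one_eq_two, rpow_add_one (by positivity)]
    field_simp
    ring

end Decay

section DiagonallyDominant

variable [DecidableEq ι] {A : Matrix ι ι ℝ}

def invDiag (A : Matrix ι ι ℝ) : Matrix ι ι ℝ := diagonal fun i => (A i i)⁻¹

def jacobiMajorant (A : Matrix ι ι ℝ) : Matrix ι ι ℝ :=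
  of fun i j => if i = j then 0 else |A i j| / A i i

theorem jacobiMajorant_nonneg (hA : ∀ i, 0 < A i i) (i j : ι) : 0 ≤ jacobiMajorant A i j := by
  simp only [jacobiMajorant, of_apply]
  split_ifs
  · exact le_rfl
  · exact div_nonneg (abs_nonneg _) (hA i).le

theorem abs_one_sub_invDiag_mul_apply [Fintype ι] (hA : ∀ i, 0 < A i i) (i j : ι) :
    |(1 - invDiag A * A) i j| = jacobiMajorant A i j := by
  rcases eq_or_ne i j with rfl | hij
  · simp [invDiag, jacobiMajorant, (hA i).ne']
  · simp [invDiag, jacobiMajorant, hij, abs_of_pos (hA i), div_eq_inv_mul]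

theorem sum_jacobiMajorant_apply [Fintype ι] (i : ι) :
    ∑ j, jacobiMajorant A i j = (∑ j ∈ Finset.univ.erase i, |A i j|) / A i i := by
  rw [← Finset.add_sum_erase _ _ (Finset.mem_univ i), Finset.sum_div]
  simp only [jacobiMajorant, of_apply, if_pos, zero_add]
  exact Finset.sum_congr rfl fun j hj => if_neg (Finset.ne_of_mem_erase hj).symm

theorem mul_jacobiMajorant_apply_comm (hA : A.IsSymm) (hA0 : ∀ i, A i i ≠ 0) (i j : ι) :
    A i i * jacobiMajorant A i j = A j j * jacobiMajorant A j i := by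
  rcases eq_or_ne i j with rfl | hij
  · rfl
  · simp [jacobiMajorant, hij, hij.symm, mul_div_cancel₀, hA0, hA.apply i j]

theorem sum_pow_jacobiMajorant_mul_invDiag_apply_le [Fintype ι] {δ q : ℝ} (hA : A.IsSymm)
    (hδ : 0 < δ) (hdiag : ∀ i, δ ≤ A i i) (hrow : ∀ i, ∑ j, jacobiMajorant A i j ≤ q)
    (n : ℕ) (j : ι) : ∑ i, (jacobiMajorant A ^ n * invDiag A) i j ≤ δ⁻¹ * q ^ n := by
  have hpos i : 0 < A i i := hδ.trans_le (hdiag i)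
  have hP0 := jacobiMajorant_nonneg hpos
  have hq : 0 ≤ q := (Finset.sum_nonneg fun k _ => hP0 j k).trans (hrow j)
  calc ∑ i, (jacobiMajorant A ^ n * invDiag A) i j
      = ∑ i, (jacobiMajorant A ^ n) j i * (A i i)⁻¹ := by
        refine Finset.sum_congr rfl fun i _ => ?_
        have :=
          mul_pow_apply_comm (mul_jacobiMajorant_apply_comm hA fun k => (hpos k).ne') n i j
        rw [invDiag, mul_diagonal, ← div_eq_mul_inv, ← div_eq_mul_inv,
          div_eq_div_iff (hpos j).ne' (hpos i).ne']
        linarith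
    _ ≤ ∑ i, (jacobiMajorant A ^ n) j i * δ⁻¹ := by
        gcongr with i
        · exact pow_apply_nonneg hP0 n j i
        · exact hdiag i
    _ ≤ δ⁻¹ * q ^ n := by
        rw [← Finset.sum_mul, mul_comm]
        exact mul_le_mul_of_nonneg_left (sum_pow_apply_le hP0 hq hrow n j) (by positivity)

theorem pow_jacobiMajorant_mul_invDiag_apply_nonneg [Fintype ι] (hA : ∀ i, 0 < A i i) (n : ℕ)
    (i j : ι) : 0 ≤ (jacobiMajorant A ^ n * invDiag A) i j := by
  rw [invDiag, mul_diagonal]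
  exact mul_nonneg (pow_apply_nonneg (jacobiMajorant_nonneg hA) n i j) (inv_nonneg.2 (hA j).le)

variable [PseudoMetricSpace ι] {δ q C s : ℝ}

theorem jacobiMajorant_apply_mul_dist_rpow_le (hδ : 0 < δ) (hdiag : ∀ i, δ ≤ A i i)
    (hC : 0 ≤ C) (hdecay : ∀ i j, i ≠ j → |A i j| * dist i j ^ s ≤ C) (i j : ι) :
    jacobiMajorant A i j * dist i j ^ s ≤ C / δ := by
  rcases eq_or_ne i j with rfl | hij
  · simp only [jacobiMajorant, of_apply, if_pos, zero_mul]
    positivity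
  · simp only [jacobiMajorant, of_apply, if_neg hij, div_mul_eq_mul_div]
    exact div_le_div₀ hC (hdecay i j hij) hδ (hdiag i)

theorem pow_jacobiMajorant_mul_invDiag_apply_mul_dist_rpow_le [Fintype ι] (hA : A.IsSymm)
    (hδ : 0 < δ) (hdiag : ∀ i, δ ≤ A i i) (hq : 0 < q) (hrow : ∀ i, ∑ j, jacobiMajorant A i j ≤ q)
    (hs : 0 < s) (hC : 0 ≤ C) (hdecay : ∀ i j, i ≠ j → |A i j| * dist i j ^ s ≤ C)
    (n : ℕ) (i j : ι) :
    (jacobiMajorant A ^ n * invDiag A) i j * dist i j ^ s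
      ≤ C / δ * δ⁻¹ / q * (((n : ℝ) + 1) ^ (s + 1) * q ^ n) := by
  have hpos i : 0 < A i i := hδ.trans_le (hdiag i)
  exact apply_mul_dist_rpow_le_of_succ_eq_mul (M := fun n => jacobiMajorant A ^ n * invDiag A)
    hs hq (jacobiMajorant_nonneg hpos) hrow
    (jacobiMajorant_apply_mul_dist_rpow_le hδ hdiag hC hdecay)
    (pow_jacobiMajorant_mul_invDiag_apply_nonneg hpos)
    (sum_pow_jacobiMajorant_mul_invDiag_apply_le hA hδ hdiag hrow)
    (fun i j hij => by simp [invDiag, hij]) (fun n => by rw [pow_succ', mul_assoc]) n i j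

theorem isUnit_and_abs_inv_apply_mul_le [Fintype ι] (hA : A.IsSymm) (hδ : 0 < δ)
    (hdiag : ∀ i, δ ≤ A i i) (hq0 : 0 < q) (hq1 : q < 1)
    (hrow : ∀ i, ∑ j ∈ Finset.univ.erase i, |A i j| ≤ q * A i i)
    (hs : 0 < s) (hC : 0 ≤ C) (hdecay : ∀ i j, i ≠ j → |A i j| * dist i j ^ s ≤ C) :
    IsUnit A ∧ ∀ i j, |A⁻¹ i j| * (dist i j ^ s + 1) ≤ neumannDecayConst (C / δ) δ⁻¹ q s := by
  have hpos i : 0 < A i i := hδ.trans_le (hdiag i)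
  have hJ := abs_one_sub_invDiag_mul_apply hpos
  have hProw i : ∑ j, jacobiMajorant A i j ≤ q := by
    rw [sum_jacobiMajorant_apply, div_le_iff₀ (hpos i)]
    exact hrow i
  obtain ⟨hunit, hsum⟩ :=
    hasSum_pow_mul_apply_inv A (invDiag A) hq1 fun i => by simpa only [hJ] using hProw i
  refine ⟨hunit, fun i j => ?_⟩
  have hterm (n : ℕ) : ‖((1 - invDiag A * A) ^ n * invDiag A) i j * (dist i j ^ s + 1)‖
      ≤ C / δ * δ⁻¹ / q * (((n : ℝ) + 1) ^ (s + 1) * q ^ n) + δ⁻¹ * q ^ n := by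
    set M := jacobiMajorant A ^ n * invDiag A
    have hM : |((1 - invDiag A * A) ^ n * invDiag A) i j| ≤ M i j := by
      simp only [M, invDiag, mul_diagonal, abs_mul, abs_inv, abs_of_pos (hpos j)]
      exact mul_le_mul_of_nonneg_right (abs_pow_apply_le (fun i j => (hJ i j).le) n i j)
        (inv_nonneg.2 (hpos j).le)
    have hMj : M i j ≤ δ⁻¹ * q ^ n :=
      (Finset.single_le_sum (fun k _ => pow_jacobiMajorant_mul_invDiag_apply_nonneg hpos n k j)
        (Finset.mem_univ i)).trans
        (sum_pow_jacobiMajorant_mul_invDiag_apply_le hA hδ hdiag hProw n j)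
    have hMdecay := pow_jacobiMajorant_mul_invDiag_apply_mul_dist_rpow_le hA hδ hdiag hq0 hProw
      hs hC hdecay n i j
    rw [norm_mul, norm_eq_abs, norm_of_nonneg (by positivity), mul_add_one]
    exact add_le_add ((mul_le_mul_of_nonneg_right hM (by positivity)).trans hMdecay)
      (hM.trans hMj)
  have := ((hsum i j).mul_right (dist i j ^ s + 1)).norm_le_of_bounded
    (hasSum_neumannDecayConst hq0.le hq1) hterm
  rwa [norm_mul, norm_eq_abs, norm_of_nonneg (by positivity)] at this

end DiagonallyDominant

end Matrix

namespace GibbsLSI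

theorem inverse_matrix_decay_general
    (d : ℕ) (δ C α : ℝ) (hδ : 0 < δ) (hC : 0 < C) (hα : 0 < α) :
    ∃ α' C' : ℝ, 0 < α' ∧ 0 < C' ∧
      ∀ (Λ : Finset (Fin d → ℤ)) (A : Matrix ↥Λ ↥Λ ℝ),
        (∀ i j, A i j = A j i) →
        (∀ i : ↥Λ, (∑ j ∈ Finset.univ.erase i, |A i j|) + δ ≤ A i i) →
        (∀ i j, i ≠ j → |A i j| ≤ C / (dist i.1 j.1 ^ ((d : ℝ) + α) + 1)) →
        IsUnit A ∧
          ∀ i j, |A⁻¹ i j| ≤ C' / (dist i.1 j.1 ^ ((d : ℝ) + α') + 1) := by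
  set s : ℝ := d + α
  have hs : (Fintype.card (Fin d) : ℝ) < s := by simp only [Fintype.card_fin, s]; linarith
  set S := ∑' k : Fin d → ℤ, 1 / (‖k‖ ^ s + 1)
  have hS : 0 < S :=
    (summable_one_div_norm_rpow_add_one hs).tsum_pos (fun _ => by positivity) 0
      (by positivity)
  set q := C * S / (C * S + δ)
  have hq0 : 0 < q := by positivity
  have hq1 : q < 1 := (div_lt_one (by positivity)).2 (by linarith)
  refine ⟨α, neumannDecayConst (C / δ) δ⁻¹ q s, hα,
    neumannDecayConst_pos (by positivity) (by positivity) hq0 hq1,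
    fun Λ A hsym hdom hdecay => ?_⟩
  have hdiag i : δ ≤ A i i :=
    le_of_add_le_of_nonneg_right (hdom i) (Finset.sum_nonneg fun j _ => abs_nonneg (A i j))
  have hrow i : ∑ j ∈ Finset.univ.erase i, |A i j| ≤ q * A i i :=
    le_div_add_mul_of_add_le (by positivity) hδ (sum_erase_abs_le_mul_tsum hs hC.le hdecay i)
      (hdom i)
  have hdecay' i j (hij : i ≠ j) : |A i j| * dist i.1 j.1 ^ s ≤ C := by
    have := hdecay i j hij
    rw [le_div_iff₀ (by positivity), mul_add_one] at this
    linarith [abs_nonneg (A i j)]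
  obtain ⟨hunit, hinv⟩ := Matrix.isUnit_and_abs_inv_apply_mul_le
    (Matrix.IsSymm.ext fun i j => hsym j i) hδ hdiag hq0 hq1 hrow (by positivity) hC.le hdecay'
  exact ⟨hunit, fun i j => (le_div_iff₀ (by positivity)).2 (hinv i j)⟩

/-- a symmetric, strictly diagonally dominant matrix indexed by a finite
subset of the lattice whose off-diagonal entries decay algebraically is invertible,
and its inverse also has algebraically decaying entries, with exponent and constant
depending only on `d`, `δ`, `C`, `α`. -/
theorem inverse_matrix_decay
    (d : ℕ) (hd : 1 ≤ d) (δ C α : ℝ) (hδ : 0 < δ) (hC : 0 < C) (hα : 0 < α) :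
    ∃ α' C' : ℝ, 0 < α' ∧ 0 < C' ∧
      ∀ (Λ : Finset (Fin d → ℤ)) (A : Matrix ↥Λ ↥Λ ℝ),
        (∀ i j, A i j = A j i) →
        (∀ i : ↥Λ, (∑ j ∈ Finset.univ.erase i, |A i j|) + δ ≤ A i i) →
        (∀ i j, i ≠ j → |A i j| ≤ C / (dist i.1 j.1 ^ ((d : ℝ) + α) + 1)) →
        IsUnit A ∧
          ∀ i j, |A⁻¹ i j| ≤ C' / (dist i.1 j.1 ^ ((d : ℝ) + α') + 1) :=
  inverse_matrix_decay_general d δ C α hδ hC hα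

end GibbsLSI
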